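/- arXiv:2303.01366 — 2 statements merged into one kernel-verified Lean document; each statement's English description precedes it below -/
import Mathlib

section
/- Let μ be a singular cardinal, θ = cf(μ), and μ⃗ = ⟨μ_i : i < θ⟩ an increasing sequence of regular cardinals converging to μ. Suppose there is a θ-covering matrix D = ⟨D(i,β) : i < θ, β < μ⁺⟩ for μ⁺ such that D respects μ⃗ and CP(D) holds. Then cf(∏μ⃗, <*) = μ⁺. -/
universe u

open Cardinal

/-- `C` is a club in the ordinal `β`: a subset of `β` that is unbounded in `β` and
closed (contains the supremum of each of its nonempty subsets whenever that
supremum is `< β`). -/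
def IsClubIn (C : Set Ordinal.{u}) (β : Ordinal.{u}) : Prop :=
  C ⊆ Set.Iio β ∧ (∀ γ < β, ∃ x ∈ C, γ ≤ x) ∧
    ∀ s ⊆ C, s.Nonempty → sSup s < β → sSup s ∈ C

/-- `D` is a `θ`-covering matrix for `λ` (indexed by `i < θ.ord` and `β < λ.ord`):
for each `β < λ`, `⟨D i β : i < θ⟩` is `⊆`-increasing with union `β`, and for
`β < γ < λ` every `D i β` is contained in some `D j γ`. -/
def IsCoveringMatrix (θ lam : Cardinal.{u})
    (D : Ordinal.{u} → Ordinal.{u} → Set Ordinal.{u}) : Prop :=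
  (∀ β < lam.ord, ∀ i j : Ordinal.{u}, i ≤ j → j < θ.ord → D i β ⊆ D j β) ∧
    (∀ β < lam.ord, (⋃ i ∈ Set.Iio θ.ord, D i β) = Set.Iio β) ∧
    (∀ β γ : Ordinal.{u}, β < γ → γ < lam.ord → ∀ i < θ.ord, ∃ j < θ.ord, D i β ⊆ D j γ)

/-- The covering matrix `D` is transitive. -/
def TransitiveCM (θ lam : Cardinal.{u})
    (D : Ordinal.{u} → Ordinal.{u} → Set Ordinal.{u}) : Prop :=
  ∀ i < θ.ord, ∀ β γ : Ordinal.{u}, γ < lam.ord → β ∈ D i γ → D i β ⊆ D i γ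

/-- The covering matrix `D` is uniform: every limit `β < λ` has some `D i β`
containing a club in `β`. -/
def UniformCM (θ lam : Cardinal.{u})
    (D : Ordinal.{u} → Ordinal.{u} → Set Ordinal.{u}) : Prop :=
  ∀ β < lam.ord, Order.IsSuccLimit β → ∃ i < θ.ord, ∃ C ⊆ D i β, IsClubIn C β

/-- The covering matrix `D` respects the sequence `μs`: `|D i β| < μs i`. -/
def RespectsCM (θ lam : Cardinal.{u})
    (D : Ordinal.{u} → Ordinal.{u} → Set Ordinal.{u})
    (μs : Ordinal.{u} → Cardinal.{u}) : Prop :=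
  ∀ i < θ.ord, ∀ β < lam.ord, #(D i β) < Cardinal.lift.{u + 1} (μs i)

/-- `CP(D)`: there is an unbounded `A ⊆ λ` such that every `X ⊆ A` with `|X| = θ`
is contained in some entry of the matrix `D`. -/
def CPmatrix (θ lam : Cardinal.{u})
    (D : Ordinal.{u} → Ordinal.{u} → Set Ordinal.{u}) : Prop :=
  ∃ A : Set Ordinal.{u}, A ⊆ Set.Iio lam.ord ∧ (∀ γ < lam.ord, ∃ α ∈ A, γ ≤ α) ∧
    ∀ X : Set Ordinal.{u}, X ⊆ A → #X = Cardinal.lift.{u + 1} θ →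
      ∃ i < θ.ord, ∃ β < lam.ord, X ⊆ D i β

/-- `f` is a member of the product `∏ μ⃗` (encoded as a function on ordinals that is
`0` outside `θ`). -/
def InProd (θ : Cardinal.{u}) (μs : Ordinal.{u} → Cardinal.{u})
    (f : Ordinal.{u} → Ordinal.{u}) : Prop :=
  (∀ i < θ.ord, f i < (μs i).ord) ∧ ∀ i : Ordinal.{u}, θ.ord ≤ i → f i = 0

/-- The eventual domination order `<*` on `∏ μ⃗`: `f <* g` iff
`|{i < θ : g i ≤ f i}| < θ`. -/
def LtStar (θ : Cardinal.{u}) (f g : Ordinal.{u} → Ordinal.{u}) : Prop :=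
  #{i : Ordinal.{u} | i < θ.ord ∧ g i ≤ f i} < Cardinal.lift.{u + 1} θ

lemma sSup_lt_ord_of_mk_lt {c : Cardinal.{u}} (hc : c.IsRegular) {S : Set Ordinal.{u}}
    (h1 : S ⊆ Set.Iio c.ord) (h2 : #S < Cardinal.lift.{u + 1} c) : sSup S < c.ord := by
  rcases S.eq_empty_or_nonempty with rfl | hne
  · simpa using hc.ord_pos
  obtain ⟨d, hd⟩ := Cardinal.mem_range_lift_of_le.{u, u+1} h2.le
  have hdc : d < c := by
    rw [← Cardinal.lift_lt.{u, u+1}, hd]; exact h2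
  have hmk : #(ULift.{u+1} d.out) = #S := by
    rw [Cardinal.mk_uLift, Cardinal.mk_out, hd]
  obtain ⟨q⟩ := Cardinal.eq.mp hmk
  have hrange : Set.range (fun x : d.out => ((q ⟨x⟩ : S) : Ordinal)) = S := by
    ext x
    constructor
    · rintro ⟨y, rfl⟩; exact (q ⟨y⟩).2
    · intro hx
      obtain ⟨⟨y⟩, hy⟩ := q.surjective ⟨x, hx⟩
      exact ⟨y, by simp only [hy]⟩
  have hsup : sSup S = iSup (fun x : d.out => ((q ⟨x⟩ : S) : Ordinal)) := by
    rw [iSup, hrange]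
  rw [hsup]
  refine Ordinal.iSup_lt_ord ?_ fun x => h1 (q ⟨x⟩).2
  rwa [Cardinal.mk_out, hc.cof_eq]

lemma lower_bound (μ : Cardinal.{u}) (hμ : ℵ₀ ≤ μ) (hsing : μ.ord.cof < μ)
    (μs : Ordinal.{u} → Cardinal.{u})
    (hmono : ∀ i j : Ordinal.{u}, i < j → j < (μ.ord.cof).ord → μs i < μs j)
    (hreg : ∀ i < (μ.ord.cof).ord, (μs i).IsRegular)
    (hconv : ∀ c < μ, ∃ i < (μ.ord.cof).ord, c ≤ μs i)
    (F : Set (Ordinal.{u} → Ordinal.{u}))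
    (hF1 : ∀ g ∈ F, InProd (μ.ord.cof) μs g)
    (hF2 : ∀ f : Ordinal.{u} → Ordinal.{u}, InProd (μ.ord.cof) μs f →
      ∃ g ∈ F, LtStar (μ.ord.cof) f g) :
    Cardinal.lift.{u + 1} (Order.succ μ) ≤ #F := by
  set θ : Cardinal.{u} := μ.ord.cof with hθdef
  have hθ0 : ℵ₀ ≤ θ := Ordinal.aleph0_le_cof.2 (Cardinal.isSuccLimit_ord hμ)
  have hθord : Order.IsSuccLimit θ.ord := Cardinal.isSuccLimit_ord hθ0
  have hmsle : ∀ a b : Ordinal, a ≤ b → b < θ.ord → μs a ≤ μs b := by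
    intro a b hab hb
    rcases eq_or_lt_of_le hab with rfl | h
    · exact le_rfl
    · exact (hmono a b h hb).le
  classical
  by_contra hcon
  push_neg at hcon
  have hFle : #F ≤ Cardinal.lift.{u + 1} μ := by
    rw [Cardinal.lift_succ] at hcon
    exact Order.lt_succ_iff.mp hcon
  -- F is nonempty
  have hzero : InProd θ μs fun _ => 0 := by
    refine ⟨fun i hi => ?_, fun i _ => rfl⟩
    exact (hreg i hi).ord_pos
  obtain ⟨g₀, hg₀F, _⟩ := hF2 _ hzero
  have hFne : Nonempty F := ⟨⟨g₀, hg₀F⟩⟩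
  -- surjection from Iio μ.ord onto F
  have hle2 : #F ≤ #(Set.Iio μ.ord) := by
    rwa [Ordinal.mk_Iio_ordinal, Cardinal.card_ord]
  obtain ⟨e0⟩ := Cardinal.le_def _ _ |>.mp hle2
  let e : Set.Iio μ.ord → F := Function.invFun e0
  have hesurj : Function.Surjective e := Function.invFun_surjective e0.injective
  let e' : Ordinal.{u} → Ordinal.{u} → Ordinal.{u} := fun α k =>
    if h : α < μ.ord then (e ⟨α, h⟩ : Ordinal → Ordinal) k else 0
  have he' : ∀ α k, k < θ.ord → e' α k < (μs k).ord := by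
    intro α k hk
    by_cases h : α < μ.ord
    · simp only [e', dif_pos h]
      exact (hF1 _ (e ⟨α, h⟩).2).1 k hk
    · simp only [e', dif_neg h]
      exact (hreg k hk).ord_pos
  let T : Ordinal.{u} → Ordinal.{u} → Set Ordinal.{u} := fun j k =>
    Set.range fun α : Set.Iio (μs j).ord => e' α k + 1
  have hTsub : ∀ j k, k < θ.ord → T j k ⊆ Set.Iio (μs k).ord := by
    rintro j k hk x ⟨α, rfl⟩
    have h1 : e' α k < (μs k).ord := he' α k hk
    have := (Cardinal.isSuccLimit_ord (hreg k hk).aleph0_le).succ_lt h1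
    rwa [← Ordinal.add_one_eq_succ] at this
  have hTlt : ∀ j k, j < k → k < θ.ord → sSup (T j k) < (μs k).ord := by
    intro j k hjk hk
    refine sSup_lt_ord_of_mk_lt (hreg k hk) (hTsub j k hk) ?_
    calc #(T j k) ≤ #(Set.Iio (μs j).ord) := Cardinal.mk_range_le
      _ = Cardinal.lift.{u + 1} (μs j) := by rw [Ordinal.mk_Iio_ordinal, Cardinal.card_ord]
      _ < Cardinal.lift.{u + 1} (μs k) := Cardinal.lift_lt.2 (hmono j k hjk hk)
  let f : Ordinal.{u} → Ordinal.{u} := fun k =>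
    if h : (∃ j, j < θ.ord ∧ k = j + 1) ∧ k < θ.ord then sSup (T h.1.choose k) else 0
  have hfInProd : InProd θ μs f := by
    constructor
    · intro k hk
      by_cases h : (∃ j, j < θ.ord ∧ k = j + 1) ∧ k < θ.ord
      · simp only [f, dif_pos h]
        have hspec := h.1.choose_spec
        refine hTlt _ k ?_ hk
        have h1 : h.1.choose < h.1.choose + 1 := by
          rw [Ordinal.add_one_eq_succ]; exact Order.lt_succ _
        exact h1.trans_eq hspec.2.symm
      · simp only [f, dif_neg h]
        exact (hreg k hk).ord_pos
    · intro k hk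
      have : ¬ ((∃ j, j < θ.ord ∧ k = j + 1) ∧ k < θ.ord) := fun h => absurd h.2 (not_lt.2 hk)
      simp only [f, dif_neg this]
  obtain ⟨g, hgF, hls⟩ := hF2 f hfInProd
  obtain ⟨⟨α₀, hα₀⟩, hge⟩ := hesurj ⟨g, hgF⟩
  have he'g : ∀ k, e' α₀ k = g k := by
    intro k
    simp only [e', hge]
    exact dif_pos hα₀
  obtain ⟨j₁, hj₁θ, hj₁⟩ := hconv α₀.card (Cardinal.lt_ord.mp hα₀)
  have hi₂θ : j₁ + 1 < θ.ord := by
    rw [Ordinal.add_one_eq_succ]; exact hθord.succ_lt hj₁θ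
  set i₂ := j₁ + 1 with hi₂def
  have hα₀i₂ : α₀ < (μs i₂).ord := by
    rw [Cardinal.lt_ord]
    refine hj₁.trans_lt (hmono j₁ i₂ ?_ hi₂θ)
    rw [hi₂def, Ordinal.add_one_eq_succ]; exact Order.lt_succ _
  have hclaim : ∀ j', i₂ ≤ j' → j' < θ.ord →
      (j' + 1) ∈ {i : Ordinal.{u} | i < θ.ord ∧ g i ≤ f i} := by
    intro j' hij' hj'θ
    have hkθ : j' + 1 < θ.ord := by rw [Ordinal.add_one_eq_succ]; exact hθord.succ_lt hj'θ
    have hex : (∃ j, j < θ.ord ∧ j' + 1 = j + 1) ∧ j' + 1 < θ.ord := ⟨⟨j', hj'θ, rfl⟩, hkθ⟩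
    have hcancel : ∀ a b : Ordinal.{u}, a + 1 = b + 1 → a = b := by
      intro a b h
      rwa [Ordinal.add_one_eq_succ, Ordinal.add_one_eq_succ, Order.succ_eq_succ_iff] at h
    have hchoose : hex.1.choose = j' := by
      have hspec := hex.1.choose_spec
      exact (hcancel _ _ hspec.2).symm
    have hα₀j' : α₀ < (μs j').ord := by
      rw [Cardinal.lt_ord]
      exact lt_of_lt_of_le (Cardinal.lt_ord.mp hα₀i₂) (hmsle i₂ j' hij' hj'θ)
    have hmem : e' α₀ (j' + 1) + 1 ∈ T j' (j' + 1) := ⟨⟨α₀, hα₀j'⟩, rfl⟩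
    have hfk : f (j' + 1) = sSup (T j' (j' + 1)) := by
      simp only [f, dif_pos hex]
      rw [hchoose]
    have hbdd : BddAbove (T j' (j' + 1)) :=
      ⟨(μs (j' + 1)).ord, fun x hx => (hTsub j' (j' + 1) hkθ hx).le⟩
    have hle : e' α₀ (j' + 1) + 1 ≤ f (j' + 1) := by
      rw [hfk]; exact le_csSup hbdd hmem
    refine ⟨hkθ, ?_⟩
    rw [← he'g]
    exact le_trans le_self_add hle
  have hsub : (fun o : Ordinal.{u} => o + 1) '' Set.Ico i₂ θ.ord ⊆
      {i : Ordinal.{u} | i < θ.ord ∧ g i ≤ f i} := by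
    rintro x ⟨j', hj', rfl⟩
    exact hclaim j' hj'.1 hj'.2
  have hIco : Cardinal.lift.{u + 1} θ ≤ #(Set.Ico i₂ θ.ord) := by
    by_contra h
    push_neg at h
    have h2 : #(Set.Iio i₂) < Cardinal.lift.{u + 1} θ := by
      rw [Ordinal.mk_Iio_ordinal]
      exact Cardinal.lift_lt.2 (Cardinal.lt_ord.mp hi₂θ)
    have hunion : Set.Iio i₂ ∪ Set.Ico i₂ θ.ord = Set.Iio θ.ord :=
      Set.Iio_union_Ico_eq_Iio hi₂θ.le
    have h3 : Cardinal.lift.{u + 1} θ ≤ #(↥(Set.Iio i₂ ∪ Set.Ico i₂ θ.ord)) := by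
      rw [hunion, Ordinal.mk_Iio_ordinal, Cardinal.card_ord]
    exact absurd (h3.trans (Cardinal.mk_union_le _ _))
      (not_le.2 (Cardinal.add_lt_of_lt (Cardinal.aleph0_le_lift.2 hθ0) h2 h))
  have hinj : Function.Injective (fun o : Ordinal.{u} => o + 1) := by
    intro a b hab
    simp only [Ordinal.add_one_eq_succ] at hab
    exact Order.succ_injective hab
  have hbig : Cardinal.lift.{u + 1} θ ≤ #{i : Ordinal.{u} | i < θ.ord ∧ g i ≤ f i} :=
    calc Cardinal.lift.{u + 1} θ ≤ #(Set.Ico i₂ θ.ord) := hIco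
      _ = #((fun o : Ordinal.{u} => o + 1) '' Set.Ico i₂ θ.ord) :=
        (Cardinal.mk_image_eq hinj).symm
      _ ≤ #{i : Ordinal.{u} | i < θ.ord ∧ g i ≤ f i} := Cardinal.mk_le_mk_of_subset hsub
  exact absurd hls (not_lt.2 hbig)

/-- If `μ` is singular with `θ = cf(μ)`, `μ⃗` is an increasing sequence of regular
cardinals converging to `μ`, and there is a `θ`-covering matrix for `μ⁺` respecting `μ⃗`
for which `CP(D)` holds, then `cf(∏ μ⃗, <*) = μ⁺`. -/
theorem stmt11 (μ : Cardinal.{u}) (hμ : ℵ₀ ≤ μ) (hsing : μ.ord.cof < μ)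
    (μs : Ordinal.{u} → Cardinal.{u})
    (hmono : ∀ i j : Ordinal.{u}, i < j → j < (μ.ord.cof).ord → μs i < μs j)
    (hreg : ∀ i < (μ.ord.cof).ord, (μs i).IsRegular)
    (hlt : ∀ i < (μ.ord.cof).ord, μs i < μ)
    (hconv : ∀ c < μ, ∃ i < (μ.ord.cof).ord, c ≤ μs i)
    (D : Ordinal.{u} → Ordinal.{u} → Set Ordinal.{u})
    (hD : IsCoveringMatrix (μ.ord.cof) (Order.succ μ) D)
    (hresp : RespectsCM (μ.ord.cof) (Order.succ μ) D μs)
    (hCP : CPmatrix (μ.ord.cof) (Order.succ μ) D) :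
    sInf {c : Cardinal.{u + 1} |
        ∃ F : Set (Ordinal.{u} → Ordinal.{u}), #F = c ∧
          (∀ g ∈ F, InProd (μ.ord.cof) μs g) ∧
          ∀ f : Ordinal.{u} → Ordinal.{u}, InProd (μ.ord.cof) μs f →
            ∃ g ∈ F, LtStar (μ.ord.cof) f g} =
      Cardinal.lift.{u + 1} (Order.succ μ) := by
  classical
  set θ : Cardinal.{u} := μ.ord.cof with hθdef
  have hθ0 : ℵ₀ ≤ θ := Ordinal.aleph0_le_cof.2 (Cardinal.isSuccLimit_ord hμ)
  have hθord : Order.IsSuccLimit θ.ord := Cardinal.isSuccLimit_ord hθ0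
  have hmsle : ∀ a b : Ordinal.{u}, a ≤ b → b < θ.ord → μs a ≤ μs b := by
    intro a b hab hb
    rcases eq_or_lt_of_le hab with rfl | h
    · exact le_rfl
    · exact (hmono a b h hb).le
  have hsucreg : (Order.succ μ).IsRegular := Cardinal.isRegular_succ hμ
  have hΛlim : Order.IsSuccLimit (Order.succ μ).ord := Cardinal.isSuccLimit_ord hsucreg.aleph0_le
  obtain ⟨A, hA1, hA2, hA3⟩ := hCP
  have hAbig : Cardinal.lift.{u + 1} μ ≤ #A := by
    by_contra h
    push_neg at h
    have h2 : #A < Cardinal.lift.{u + 1} (Order.succ μ) :=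
      h.trans_le (Cardinal.lift_le.2 (Order.le_succ μ))
    have hb := sSup_lt_ord_of_mk_lt hsucreg hA1 h2
    have hb1 : sSup A + 1 < (Order.succ μ).ord := by
      rw [Ordinal.add_one_eq_succ]; exact hΛlim.succ_lt hb
    obtain ⟨α, hαA, hα⟩ := hA2 _ hb1
    have h3 : α ≤ sSup A := le_csSup ⟨(Order.succ μ).ord, fun x hx => (hA1 hx).le⟩ hαA
    have h4 : sSup A < sSup A + 1 := by
      rw [Ordinal.add_one_eq_succ]; exact Order.lt_succ _
    exact absurd (hα.trans h3) (not_le.2 h4)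
  have hcard : #(↥(Set.Iio θ.ord) × ↥(Set.Iio μ.ord)) ≤ #A := by
    rw [Cardinal.mk_prod, Cardinal.lift_id, Cardinal.lift_id, Ordinal.mk_Iio_ordinal,
      Ordinal.mk_Iio_ordinal, Cardinal.card_ord, Cardinal.card_ord]
    calc Cardinal.lift.{u + 1} θ * Cardinal.lift.{u + 1} μ = Cardinal.lift.{u + 1} μ :=
        Cardinal.mul_eq_right (Cardinal.aleph0_le_lift.2 hμ) (Cardinal.lift_le.2 hsing.le)
          (lt_of_lt_of_le Cardinal.aleph0_pos (Cardinal.aleph0_le_lift.2 hθ0)).ne'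
      _ ≤ #A := hAbig
  obtain ⟨φ⟩ := (Cardinal.le_def _ _).mp hcard
  let φ' : Ordinal.{u} → Ordinal.{u} → Ordinal.{u} := fun i α =>
    if h : i < θ.ord ∧ α < μ.ord then (φ (⟨i, h.1⟩, ⟨α, h.2⟩) : Ordinal) else 0
  have hφ'A : ∀ i α, i < θ.ord → α < μ.ord → φ' i α ∈ A := by
    intro i α hi hα
    simp only [φ', dif_pos (⟨hi, hα⟩ : i < θ.ord ∧ α < μ.ord)]
    exact (φ (⟨i, hi⟩, ⟨α, hα⟩)).2
  have hφ'inj : ∀ i α i' α', i < θ.ord → α < μ.ord → i' < θ.ord → α' < μ.ord →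
      φ' i α = φ' i' α' → i = i' ∧ α = α' := by
    intro i α i' α' hi hα hi' hα' h
    simp only [φ', dif_pos (⟨hi, hα⟩ : i < θ.ord ∧ α < μ.ord),
      dif_pos (⟨hi', hα'⟩ : i' < θ.ord ∧ α' < μ.ord)] at h
    have h2 := φ.injective (Subtype.val_injective h)
    exact ⟨congrArg (fun p => (p.1 : Ordinal)) h2, congrArg (fun p => (p.2 : Ordinal)) h2⟩
  let S : Ordinal.{u} → Ordinal.{u} → Ordinal.{u} → Set Ordinal.{u} := fun j β i =>
    {α | α < (μs i).ord ∧ φ' i α ∈ D j β}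
  let hfun : Ordinal.{u} → Ordinal.{u} → Ordinal.{u} → Ordinal.{u} := fun j β i =>
    if h : i < θ.ord ∧ sSup (S j β i) + 1 < (μs i).ord then sSup (S j β i) + 1 else 0
  have hInProd : ∀ j β, InProd θ μs (hfun j β) := by
    intro j β
    constructor
    · intro i hi
      by_cases h : i < θ.ord ∧ sSup (S j β i) + 1 < (μs i).ord
      · simp only [hfun, dif_pos h]; exact h.2
      · simp only [hfun, dif_neg h]; exact (hreg i hi).ord_pos
    · intro i hi
      have hne : ¬(i < θ.ord ∧ sSup (S j β i) + 1 < (μs i).ord) := fun h =>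
        absurd h.1 (not_lt.2 hi)
      simp only [hfun, dif_neg hne]
  have hordle : ∀ i, i < θ.ord → (μs i).ord ≤ μ.ord := fun i hi =>
    (Cardinal.ord_lt_ord.2 (hlt i hi)).le
  have hdom : ∀ f, InProd θ μs f →
      ∃ j < θ.ord, ∃ β < (Order.succ μ).ord, LtStar θ f (hfun j β) := by
    intro f hf
    have hfμ : ∀ i, i < θ.ord → f i < μ.ord := fun i hi =>
      lt_of_lt_of_le (hf.1 i hi) (hordle i hi)
    have hXA : Set.range (fun i : ↥(Set.Iio θ.ord) => φ' i (f i)) ⊆ A := by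
      rintro x ⟨i, rfl⟩
      exact hφ'A i (f i) i.2 (hfμ i i.2)
    have hXcard : #(Set.range fun i : ↥(Set.Iio θ.ord) => φ' i (f i)) =
        Cardinal.lift.{u + 1} θ := by
      rw [Cardinal.mk_range_eq _ ?_, Ordinal.mk_Iio_ordinal, Cardinal.card_ord]
      intro i i' h
      exact Subtype.ext (hφ'inj i (f i) i' (f i') i.2 (hfμ i i.2) i'.2 (hfμ i' i'.2) h).1
    obtain ⟨j, hj, β, hβ, hXD⟩ := hA3 _ hXA hXcard
    refine ⟨j, hj, β, hβ, ?_⟩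
    have hkey : ∀ i, i < θ.ord → j ≤ i → f i < hfun j β i := by
      intro i hi hji
      have hsub : S j β i ⊆ Set.Iio (μs i).ord := fun α hα => hα.1
      have hSsmall : #(S j β i) < Cardinal.lift.{u + 1} (μs i) := by
        have h1 : #(S j β i) ≤ #(D j β) := by
          refine Cardinal.mk_le_of_injective
            (f := fun α : S j β i => (⟨φ' i α, α.2.2⟩ : D j β)) ?_
          intro α α' h
          refine Subtype.ext (hφ'inj i α i α' hi (lt_of_lt_of_le α.2.1 (hordle i hi)) hi
            (lt_of_lt_of_le α'.2.1 (hordle i hi)) (congrArg Subtype.val h)).2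
        calc #(S j β i) ≤ #(D j β) := h1
          _ < Cardinal.lift.{u + 1} (μs j) := hresp j hj β hβ
          _ ≤ Cardinal.lift.{u + 1} (μs i) := Cardinal.lift_le.2 (hmsle j i hji hi)
      have hsup := sSup_lt_ord_of_mk_lt (hreg i hi) hsub hSsmall
      have hguard : sSup (S j β i) + 1 < (μs i).ord := by
        rw [Ordinal.add_one_eq_succ]
        exact (Cardinal.isSuccLimit_ord (hreg i hi).aleph0_le).succ_lt hsup
      have hmem : f i ∈ S j β i := ⟨hf.1 i hi, hXD ⟨⟨i, hi⟩, rfl⟩⟩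
      have hfile : f i ≤ sSup (S j β i) :=
        le_csSup ⟨(μs i).ord, fun x hx => (hsub hx).le⟩ hmem
      have heq : hfun j β i = sSup (S j β i) + 1 := dif_pos ⟨hi, hguard⟩
      rw [heq]
      exact lt_of_le_of_lt hfile (by rw [Ordinal.add_one_eq_succ]; exact Order.lt_succ _)
    have hsubbad : {i : Ordinal.{u} | i < θ.ord ∧ hfun j β i ≤ f i} ⊆ Set.Iio j := by
      intro i hi
      by_contra h
      rw [Set.mem_Iio, not_lt] at h
      exact absurd hi.2 (not_le.2 (hkey i hi.1 h))
    show #{i : Ordinal.{u} | i < θ.ord ∧ hfun j β i ≤ f i} < Cardinal.lift.{u + 1} θ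
    calc #{i : Ordinal.{u} | i < θ.ord ∧ hfun j β i ≤ f i} ≤ #(Set.Iio j) :=
        Cardinal.mk_le_mk_of_subset hsubbad
      _ = Cardinal.lift.{u + 1} j.card := Ordinal.mk_Iio_ordinal j
      _ < Cardinal.lift.{u + 1} θ := Cardinal.lift_lt.2 (Cardinal.lt_ord.mp hj)
  let F0 : Set (Ordinal.{u} → Ordinal.{u}) :=
    (fun p : Ordinal.{u} × Ordinal.{u} => hfun p.1 p.2) ''
      (Set.Iio θ.ord ×ˢ Set.Iio (Order.succ μ).ord)
  have hF0card : #F0 ≤ Cardinal.lift.{u + 1} (Order.succ μ) := by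
    calc #F0 ≤ #(↥(Set.Iio θ.ord ×ˢ Set.Iio (Order.succ μ).ord)) := Cardinal.mk_image_le
      _ = #(↥(Set.Iio θ.ord) × ↥(Set.Iio (Order.succ μ).ord)) :=
        Cardinal.mk_congr (Equiv.Set.prod _ _)
      _ = Cardinal.lift.{u + 1} θ * Cardinal.lift.{u + 1} (Order.succ μ) := by
        rw [Cardinal.mk_prod, Cardinal.lift_id, Cardinal.lift_id, Ordinal.mk_Iio_ordinal,
          Ordinal.mk_Iio_ordinal, Cardinal.card_ord, Cardinal.card_ord]
      _ = Cardinal.lift.{u + 1} (Order.succ μ) :=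
        Cardinal.mul_eq_right (Cardinal.aleph0_le_lift.2 hsucreg.aleph0_le)
          (Cardinal.lift_le.2 (hsing.le.trans (Order.le_succ μ)))
          (lt_of_lt_of_le Cardinal.aleph0_pos (Cardinal.aleph0_le_lift.2 hθ0)).ne'
  have hPdom : ∀ f, InProd θ μs f →
      ∃ g ∈ {f : Ordinal.{u} → Ordinal.{u} | InProd θ μs f}, LtStar θ f g := by
    intro f hf
    refine ⟨fun i => if i < θ.ord then f i + 1 else 0,
      ⟨fun i hi => ?_, fun i hi => if_neg (not_lt.2 hi)⟩, ?_⟩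
    · show (if i < θ.ord then f i + 1 else 0) < (μs i).ord
      rw [if_pos hi, Ordinal.add_one_eq_succ]
      exact (Cardinal.isSuccLimit_ord (hreg i hi).aleph0_le).succ_lt (hf.1 i hi)
    · have hempty : {i : Ordinal.{u} |
          i < θ.ord ∧ (if i < θ.ord then f i + 1 else 0) ≤ f i} = ∅ := by
        ext i
        simp only [Set.mem_setOf_eq, Set.mem_empty_iff_false, iff_false, not_and]
        intro hi
        rw [if_pos hi, Ordinal.add_one_eq_succ]
        exact not_le.2 (Order.lt_succ _)
      show #{i : Ordinal.{u} |
          i < θ.ord ∧ (if i < θ.ord then f i + 1 else 0) ≤ f i} < Cardinal.lift.{u + 1} θ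
      rw [hempty, Cardinal.mk_emptyCollection]
      exact lt_of_lt_of_le Cardinal.aleph0_pos (Cardinal.aleph0_le_lift.2 hθ0)
  have hPbig : Cardinal.lift.{u + 1} (Order.succ μ) ≤
      #{f : Ordinal.{u} → Ordinal.{u} | InProd θ μs f} :=
    lower_bound μ hμ hsing μs hmono hreg hconv _ (fun g hg => hg) hPdom
  obtain ⟨Q, hQP, hQcard⟩ := Cardinal.le_mk_iff_exists_subset.mp hPbig
  have hFcard : #(↥(F0 ∪ Q)) = Cardinal.lift.{u + 1} (Order.succ μ) := by
    refine le_antisymm ((Cardinal.mk_union_le _ _).trans ?_) ?_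
    · rw [hQcard]
      calc #F0 + Cardinal.lift.{u + 1} (Order.succ μ) ≤
          Cardinal.lift.{u + 1} (Order.succ μ) + Cardinal.lift.{u + 1} (Order.succ μ) :=
            add_le_add_left hF0card _
        _ = Cardinal.lift.{u + 1} (Order.succ μ) :=
            Cardinal.add_eq_self (Cardinal.aleph0_le_lift.2 hsucreg.aleph0_le)
    · rw [← hQcard]
      exact Cardinal.mk_le_mk_of_subset Set.subset_union_right
  have hFmem : ∀ g ∈ F0 ∪ Q, InProd θ μs g := by
    intro g hg
    rcases hg with hg | hg
    · obtain ⟨p, _, rfl⟩ := hg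
      exact hInProd p.1 p.2
    · exact hQP hg
  have hFdom : ∀ f, InProd θ μs f → ∃ g ∈ F0 ∪ Q, LtStar θ f g := by
    intro f hf
    obtain ⟨j, hj, β, hβ, h⟩ := hdom f hf
    exact ⟨hfun j β, Or.inl ⟨(j, β), ⟨hj, hβ⟩, rfl⟩, h⟩
  have hmem : Cardinal.lift.{u + 1} (Order.succ μ) ∈ {c : Cardinal.{u + 1} |
      ∃ F : Set (Ordinal.{u} → Ordinal.{u}), #F = c ∧
        (∀ g ∈ F, InProd θ μs g) ∧
        ∀ f : Ordinal.{u} → Ordinal.{u}, InProd θ μs f →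
          ∃ g ∈ F, LtStar θ f g} := ⟨F0 ∪ Q, hFcard, hFmem, hFdom⟩
  refine le_antisymm (csInf_le' hmem) (le_csInf ⟨_, hmem⟩ ?_)
  rintro c ⟨F', hF'c, h1, h2⟩
  rw [← hF'c]
  exact lower_bound μ hμ hsing μs hmono hreg hconv F' h1 h2
end

section
/- Suppose κ is a regular cardinal, T is a tree of height κ, and B is a set of cofinal branches of T with |B| ≤ κ. Then there is a Baumgartner function g : B → T. -/
universe u

open Cardinal

/-- A partial order is a tree order if the set of strict predecessors of every
element is well-ordered by `<`. -/
def IsTreeOrder (T : Type u) [PartialOrder T] : Prop :=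
  ∀ t : T, IsWellOrder {s : T // s < t} (· < ·)

/-- The height of an element of a tree: the order type of its set of strict
predecessors. -/
noncomputable def treeHt {T : Type u} [PartialOrder T] (hT : IsTreeOrder T) (t : T) :
    Ordinal.{u} :=
  @Ordinal.type {s : T // s < t} (· < ·) (hT t)

/-- The height of a tree: the least ordinal `α` such that the `α`-th level of the
tree is empty. -/
noncomputable def treeHeight {T : Type u} [PartialOrder T] (hT : IsTreeOrder T) :
    Ordinal.{u} :=
  sInf {α : Ordinal.{u} | ∀ t : T, treeHt hT t ≠ α}

/-- A cofinal branch of a tree: a downward-closed chain containing exactly one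
element of height `α` for every `α` less than the height of the tree. -/
def IsCofinalBranch {T : Type u} [PartialOrder T] (hT : IsTreeOrder T) (b : Set T) : Prop :=
  IsChain (· ≤ ·) b ∧ (∀ t ∈ b, ∀ s : T, s < t → s ∈ b) ∧
    ∀ α < treeHeight hT, ∃! t : T, t ∈ b ∧ treeHt hT t = α


theorem treeHt_lt_of_lt {T : Type u} [PartialOrder T] (hT : IsTreeOrder T)
    {t t' : T} (h : t < t') : treeHt hT t < treeHt hT t' := by
  haveI := hT t; haveI := hT t'
  have f : @PrincipalSeg {s : T // s < t} {s : T // s < t'} (· < ·) (· < ·) := by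
    refine ⟨⟨⟨fun s => ⟨s.1, s.2.trans h⟩, ?_⟩, ?_⟩, ⟨t, h⟩, ?_⟩
    · intro a b hab
      simpa [Subtype.ext_iff] using hab
    · intro a b
      simp [Subtype.mk_lt_mk, ← Subtype.coe_lt_coe]
      exact Iff.rfl
    · intro b
      constructor
      · rintro ⟨a, rfl⟩
        exact Subtype.mk_lt_mk.2 a.2
      · intro hb
        exact ⟨⟨b.1, by simpa [← Subtype.coe_lt_coe] using hb⟩, rfl⟩
  exact f.ordinal_type_lt

theorem exists_treeHt_eq {T : Type u} [PartialOrder T] (hT : IsTreeOrder T)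
    {t : T} {α : Ordinal.{u}} (h : α < treeHt hT t) : ∃ s, s < t ∧ treeHt hT s = α := by
  haveI := hT t
  obtain ⟨a, ha⟩ := Ordinal.typein_surj (α := {s : T // s < t}) (· < ·) h
  refine ⟨a.1, a.2, ?_⟩
  rw [← ha, ← Ordinal.type_subrel]
  haveI := hT a.1
  refine Ordinal.type_eq.2 ⟨?_⟩
  refine ⟨⟨fun u => ⟨⟨u.1, u.2.trans a.2⟩, show (⟨u.1, _⟩ : {s : T // s < t}) < a from
        Subtype.coe_lt_coe.1 u.2⟩,
      fun b => ⟨b.1.1, Subtype.coe_lt_coe.2 (show b.1 < a from b.2)⟩, ?_, ?_⟩, ?_⟩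
  · intro u; rfl
  · intro b; rfl
  · intro u v
    simp only [Equiv.coe_fn_mk, subrel_val, Subtype.mk_lt_mk]
    exact Iff.rfl

theorem treeHt_lt_treeHeight {T : Type u} [PartialOrder T] (hT : IsTreeOrder T)
    (t : T) : treeHt hT t < treeHeight hT := by
  have hne : ∀ s : T, treeHt hT s ≠ treeHeight hT := by
    have hmem : Ordinal.lsub (fun s : T => treeHt hT s) ∈
        {α : Ordinal.{u} | ∀ s : T, treeHt hT s ≠ α} :=
      fun s => (Ordinal.lt_lsub _ s).ne
    exact csInf_mem ⟨_, hmem⟩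
  rcases lt_trichotomy (treeHt hT t) (treeHeight hT) with h | h | h
  · exact h
  · exact absurd h (hne t)
  · obtain ⟨s, _, hs⟩ := exists_treeHt_eq hT h
    exact absurd hs (hne s)

/-- Two elements of a branch with unequal heights are comparable. -/
theorem branch_lt {T : Type u} [PartialOrder T] {hT : IsTreeOrder T} {b : Set T}
    (hb : IsCofinalBranch hT b) {u v : T} (hu : u ∈ b) (hv : v ∈ b)
    (h : treeHt hT u < treeHt hT v) : u < v := by
  have hne : u ≠ v := by rintro rfl; exact lt_irrefl _ h
  rcases hb.1 hu hv hne with h1 | h1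
  · exact lt_of_le_of_ne h1 hne
  · exact absurd (treeHt_lt_of_lt hT (lt_of_le_of_ne h1 hne.symm)) (asymm h)

theorem branch_unique {T : Type u} [PartialOrder T] {hT : IsTreeOrder T} {b : Set T}
    (hb : IsCofinalBranch hT b) {u v : T} (hu : u ∈ b) (hv : v ∈ b)
    (h : treeHt hT u = treeHt hT v) : u = v :=
  (hb.2.2 (treeHt hT u) (treeHt_lt_treeHeight hT u)).unique ⟨hu, rfl⟩ ⟨hv, h.symm⟩

/-- Split lemma: distinct branches share only elements below some level. -/
theorem branch_split {T : Type u} [PartialOrder T] {hT : IsTreeOrder T} {b b' : Set T}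
    (hb : IsCofinalBranch hT b) (hb' : IsCofinalBranch hT b') (hne : b ≠ b') :
    ∃ σ, σ < treeHeight hT ∧ ∀ u ∈ b, u ∈ b' → treeHt hT u < σ := by
  have hex : ∃ t, (t ∈ b ∧ t ∉ b') ∨ (t ∈ b' ∧ t ∉ b) := by
    by_contra hc
    push_neg at hc
    exact hne (Set.ext fun x => ⟨(hc x).1, (hc x).2⟩)
  obtain ⟨t, ht⟩ := hex
  refine ⟨treeHt hT t, treeHt_lt_treeHeight hT t, ?_⟩
  intro u hu hu'
  rcases ht with ⟨htb, htb'⟩ | ⟨htb', htb⟩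
  · rcases lt_trichotomy (treeHt hT u) (treeHt hT t) with h | h | h
    · exact h
    · exact absurd (branch_unique hb hu htb h ▸ hu') htb'
    · exact absurd (hb'.2.1 u hu' t (branch_lt hb htb hu h)) htb'
  · rcases lt_trichotomy (treeHt hT u) (treeHt hT t) with h | h | h
    · exact h
    · exact absurd (branch_unique hb' hu' htb' h ▸ hu) htb
    · exact absurd (hb.2.1 u hu t (branch_lt hb' htb' hu' h)) htb

/-- Baumgartner's lemma: if `κ` is a regular cardinal, `T` is a tree of height `κ`, and
`B` is a set of cofinal branches of `T` with `|B| ≤ κ`, then there is a Baumgartner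
function `g : B → T`, i.e. an injection with `g b ∈ b` for all `b ∈ B` such that
`g b < g b'` implies `g b' ∉ b`. -/
theorem stmt12 {T : Type u} [PartialOrder T] (hT : IsTreeOrder T)
    (κ : Cardinal.{u}) (hκ : κ.IsRegular) (hht : treeHeight hT = κ.ord)
    (B : Set (Set T)) (hB : ∀ b ∈ B, IsCofinalBranch hT b) (hcard : #B ≤ κ) :
    ∃ g : B → T, Function.Injective g ∧ (∀ b : B, g b ∈ (b : Set T)) ∧
      ∀ b b' : B, g b < g b' → g b' ∉ (b : Set T) := by
  classical
  -- an injective enumeration of the branches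
  obtain ⟨f⟩ : Nonempty (B ↪ κ.ord.ToType) := by
    rw [← Cardinal.le_def, Cardinal.mk_ord_toType]
    exact hcard
  set r : B → B → Prop := fun x y => f x < f y with hr
  have wf : WellFounded r := InvImage.wf f (IsWellFounded.wf)
  -- splitting levels
  have hS0 : ∀ x y : B, ∃ σ : Ordinal.{u}, σ < κ.ord ∧
      (x ≠ y → ∀ u ∈ (x : Set T), u ∈ (y : Set T) → treeHt hT u < σ) := by
    intro x y
    by_cases hxy : x = y
    · refine ⟨0, ?_, fun h => absurd hxy h⟩
      rw [Cardinal.lt_ord]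
      simpa using hκ.pos
    · obtain ⟨σ, h1, h2⟩ := branch_split (hB x x.2) (hB y y.2)
        (fun h => hxy (Subtype.ext h))
      exact ⟨σ, hht ▸ h1, fun _ => h2⟩
  choose S hS1 hS2 using hS0
  -- the recursion
  let F : ∀ x : B, (∀ y : B, r y x → Ordinal.{u}) → Ordinal.{u} := fun x IH =>
    Ordinal.lsub (fun y : {y : B // r y x} => max (IH y.1 y.2) (S y.1 x))
  let A : B → Ordinal.{u} := wf.fix F
  have hA : ∀ x, A x = Ordinal.lsub (fun y : {y : B // r y x} => max (A y.1) (S y.1 x)) :=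
    fun x => wf.fix_eq F x
  have hA1 : ∀ x y : B, r y x → A y < A x := by
    intro x y h
    rw [hA x]
    exact lt_of_le_of_lt (le_max_left _ (S y x))
      (Ordinal.lt_lsub (fun z : {z : B // r z x} => max (A z.1) (S z.1 x)) ⟨y, h⟩)
  have hA2 : ∀ x y : B, r y x → S y x < A x := by
    intro x y h
    rw [hA x]
    exact lt_of_le_of_lt (le_max_right (A y) _)
      (Ordinal.lt_lsub (fun z : {z : B // r z x} => max (A z.1) (S z.1 x)) ⟨y, h⟩)
  have hAlt : ∀ x, A x < κ.ord := by
    intro x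
    induction x using WellFounded.induction wf with
    | _ x IH =>
      rw [hA x]
      apply Cardinal.lsub_lt_ord_of_isRegular hκ
      · calc #{y : B // r y x} ≤ #(Set.Iio (f x)) := by
              apply Cardinal.mk_le_of_injective (f := fun y => (⟨f y.1, y.2⟩ : Set.Iio (f x)))
              intro a b hab
              exact Subtype.ext (f.injective (congrArg Subtype.val hab))
          _ < κ := Cardinal.mk_Iio_ord_toType (f x)
      · intro y
        exact max_lt (IH y.1 y.2) (hS1 y.1 x)
  -- the function
  have hbr : ∀ x : B, ∃! t : T, t ∈ (x : Set T) ∧ treeHt hT t = A x :=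
    fun x => (hB x x.2).2.2 (A x) (by rw [hht]; exact hAlt x)
  let g : B → T := fun x => (hbr x).exists.choose
  have hg : ∀ x : B, g x ∈ (x : Set T) ∧ treeHt hT (g x) = A x :=
    fun x => (hbr x).exists.choose_spec
  have hK : ∀ x y : B, r y x → g x ∉ (y : Set T) := by
    intro x y h hmem
    have hyx : y ≠ x := by rintro rfl; exact lt_irrefl _ h
    have h1 : treeHt hT (g x) < S y x := hS2 y x hyx (g x) hmem (hg x).1
    rw [(hg x).2] at h1
    exact absurd (hA2 x y h) (asymm h1)
  refine ⟨g, ?_, fun x => (hg x).1, ?_⟩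
  · intro x y hgxy
    by_contra hne
    rcases lt_trichotomy (f x) (f y) with h | h | h
    · exact hK y x h (hgxy ▸ (hg x).1)
    · exact hne (f.injective h)
    · exact hK x y h (hgxy ▸ (hg y).1)
  · intro x y hlt hmem
    have hne : x ≠ y := by rintro rfl; exact lt_irrefl _ hlt
    rcases lt_trichotomy (f x) (f y) with h | h | h
    · exact hK y x h hmem
    · exact hne (f.injective h)
    · have h1 : A x < A y := by
        rw [← (hg x).2, ← (hg y).2]; exact treeHt_lt_of_lt hT hlt
      exact absurd (hA1 x y h) (asymm h1)
end
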